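/- Let Ω ⊂ ℝ² be the open triangle with vertices A(−2, 1/3), B(0, 1/3), C(0, 1). Define α(x,y) = ((x y² + y − 1/9)/3)^{1/3} + 1/3 (real cube root) and z(x,y) = 1 − e^{1/α(x,y) − 1/y}. Then ∫∫_Ω (∂z/∂x(x,y))² dx dy = +∞; in particular z does not belong to H¹(Ω). -/

import Mathlib

open MeasureTheory Set Real

/-- The real (odd) cube root. -/
noncomputable def cbrt (t : ℝ) : ℝ :=
  if 0 ≤ t then t ^ ((1:ℝ)/3) else -((-t) ^ ((1:ℝ)/3))

/-- The open triangle with vertices A(−2,1/3), B(0,1/3), C(0,1):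
its sides lie on the lines y = 1/3, x = 0 and y = x/3 + 1. -/
def TriangleEx4 : Set (ℝ × ℝ) :=
  {p : ℝ × ℝ | 1/3 < p.2 ∧ p.1 < 0 ∧ p.2 < p.1 / 3 + 1}

/-- α(x,y) = ((x y² + y − 1/9)/3)^{1/3} + 1/3. -/
noncomputable def alphaEx4 : ℝ × ℝ → ℝ := fun p =>
  cbrt ((p.1 * p.2 ^ 2 + p.2 - 1/9) / 3) + 1/3

/-- The explicit solution z(x,y) = 1 − e^{1/α(x,y) − 1/y} of Example 4. -/
noncomputable def zEx4 : ℝ × ℝ → ℝ := fun p =>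
  1 - Real.exp (1 / alphaEx4 p - 1 / p.2)

/-- Partial derivative ∂z/∂x. -/
noncomputable def zEx4x (p : ℝ × ℝ) : ℝ := deriv (fun t => zEx4 (t, p.2)) p.1

/-- Partial derivative ∂z/∂y. -/
noncomputable def zEx4y (p : ℝ × ℝ) : ℝ := deriv (fun t => zEx4 (p.1, t)) p.2

/-!
With `u = (x y² + y − 1/9)/3` one has `α = ∛u + 1/3` and
`∂z/∂x = e^{1/α − 1/y} · (y²/9) · u^{−2/3} / α²`. On the side `Γ⁻ : x = 3y − 3` ending at `A`,
`u = ε³` with `ε = y − 1/3`, so in the strip `3y − 3 < x < 3y − 3 + ε³` next to it we have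
`0 < u ≤ 8ε³` and `α ≤ 1`, hence `(∂z/∂x)² ≳ ε⁻⁴`. The strip has width `ε³`, so by Tonelli
the integral of `(∂z/∂x)²` over it dominates `∫₀ ε⁻¹ dε = ∞`.
-/

theorem setLIntegral_comp_snd_eq_lintegral_mul_measure_fiber {α β : Type*} [MeasurableSpace α]
    [MeasurableSpace β] {μ : Measure α} {ν : Measure β} [SFinite μ] [SFinite ν]
    {s : Set (α × β)} (hs : MeasurableSet s) {f : β → ENNReal} (hf : Measurable f) :
    ∫⁻ p in s, f p.2 ∂μ.prod ν = ∫⁻ y, f y * μ {x | (x, y) ∈ s} ∂ν := by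
  rw [← lintegral_indicator hs,
    lintegral_prod_symm' _ ((by fun_prop : Measurable fun p : α × β => f p.2).indicator hs)]
  congr 1 with y
  rw [← lintegral_indicator_const (μ := μ) (s := {x | (x, y) ∈ s})
    (hs.preimage measurable_prodMk_right)]
  rfl

theorem setLIntegral_Ioo_ofReal_inv_sub_eq_top {a b : ℝ} (hab : a < b) :
    ∫⁻ y in Ioo a b, ENNReal.ofReal (y - a)⁻¹ = ⊤ := by
  by_contra h
  have hint : IntegrableOn (fun y => (y - a)⁻¹) (Ioo a b) := by
    refine ⟨by fun_prop, (hasFiniteIntegral_iff_ofReal ?_).2 (lt_top_iff_ne_top.2 h)⟩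
    filter_upwards [ae_restrict_mem measurableSet_Ioo] with y hy
    exact inv_nonneg.2 (sub_nonneg.2 hy.1.le)
  have := (intervalIntegrable_iff_integrableOn_Ioo_of_le hab.le).2 hint
  simp [hab.ne] at this

theorem not_integrableOn_of_le_of_lintegral_eq_top {α : Type*} [MeasurableSpace α]
    {μ : Measure α} {s : Set α} {f g : α → ℝ} (hfg : ∀ p, f p ≤ g p)
    (hf : ∫⁻ p in s, ENNReal.ofReal (f p) ∂μ = ⊤) : ¬ IntegrableOn g s μ := fun hg => by
  refine hg.2.ne (top_le_iff.1 (hf ▸ lintegral_mono fun p => ?_))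
  exact (ENNReal.ofReal_le_ofReal (hfg p)).trans (Real.ofReal_le_enorm _)

theorem cbrt_of_nonneg {t : ℝ} (ht : 0 ≤ t) : cbrt t = t ^ ((1 : ℝ) / 3) := if_pos ht

theorem cbrt_nonneg {t : ℝ} (ht : 0 ≤ t) : 0 ≤ cbrt t := by
  rw [cbrt_of_nonneg ht]; positivity

theorem cbrt_le_of_le_pow_three {t v : ℝ} (ht : 0 ≤ t) (hv : 0 ≤ v) (h : t ≤ v ^ 3) :
    cbrt t ≤ v :=
  calc cbrt t ≤ (v ^ 3) ^ ((1 : ℝ) / 3) := by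
        rw [cbrt_of_nonneg ht]; exact rpow_le_rpow ht h (by norm_num)
    _ = v := by rw [one_div]; exact_mod_cast pow_rpow_inv_natCast hv three_ne_zero

theorem hasDerivAt_cbrt {t : ℝ} (ht : 0 < t) : HasDerivAt cbrt (t ^ (-(2 : ℝ) / 3) / 3) t := by
  have heq : cbrt =ᶠ[nhds t] fun s => s ^ ((1 : ℝ) / 3) := by
    filter_upwards [lt_mem_nhds ht] with s hs using cbrt_of_nonneg hs.le
  have h := (hasDerivAt_rpow_const (p := (1 : ℝ) / 3) (Or.inl ht.ne')).congr_of_eventuallyEq heq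
  rwa [show (1 : ℝ) / 3 - 1 = -(2 : ℝ) / 3 by norm_num, mul_comm, ← div_eq_mul_one_div] at h

theorem inv_sq_le_rpow_neg_two_thirds {t v : ℝ} (ht : 0 < t) (hv : 0 < v) (h : t ≤ v ^ 3) :
    (v ^ 2)⁻¹ ≤ t ^ (-(2 : ℝ) / 3) :=
  calc (v ^ 2)⁻¹ = (v ^ 3) ^ (-(2 : ℝ) / 3) := by
        rw [← rpow_natCast_mul hv.le, ← rpow_two, ← rpow_neg hv.le]; norm_num
    _ ≤ t ^ (-(2 : ℝ) / 3) := rpow_le_rpow_of_nonpos ht h (by norm_num)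

noncomputable def uEx4 (p : ℝ × ℝ) : ℝ := (p.1 * p.2 ^ 2 + p.2 - 1/9) / 3

theorem alphaEx4_eq_cbrt_uEx4 (p : ℝ × ℝ) : alphaEx4 p = cbrt (uEx4 p) + 1/3 := rfl

theorem alphaEx4_pos {p : ℝ × ℝ} (hu : 0 ≤ uEx4 p) : 0 < alphaEx4 p := by
  rw [alphaEx4_eq_cbrt_uEx4]; linarith [cbrt_nonneg hu]

theorem hasDerivAt_alphaEx4_fst {x y : ℝ} (hu : 0 < uEx4 (x, y)) :
    HasDerivAt (fun t => alphaEx4 (t, y)) (y ^ 2 / 9 * uEx4 (x, y) ^ (-(2 : ℝ) / 3)) x := by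
  have hu' : HasDerivAt (fun t => uEx4 (t, y)) (y ^ 2 / 3) x :=
    ((((hasDerivAt_id x).mul_const (y ^ 2)).add_const y).sub_const (1/9)).div_const 3
      |>.congr_deriv (by ring)
  exact ((hasDerivAt_cbrt hu).comp x hu').add_const (1/3) |>.congr_deriv (by ring)

theorem zEx4x_eq {x y : ℝ} (hu : 0 < uEx4 (x, y)) :
    zEx4x (x, y) = exp (1 / alphaEx4 (x, y) - 1 / y) *
      (y ^ 2 / 9 * uEx4 (x, y) ^ (-(2 : ℝ) / 3)) / alphaEx4 (x, y) ^ 2 := by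
  have hz := ((((hasDerivAt_alphaEx4_fst hu).inv (alphaEx4_pos hu.le).ne').sub_const
    y⁻¹).exp).const_sub 1
  simp only [zEx4x, zEx4, one_div]
  refine hz.deriv.trans ?_
  simp only [Pi.inv_apply]
  ring

def stripEx4 : Set (ℝ × ℝ) :=
  {p | p.2 ∈ Ioo (1/3) (2/3) ∧ p.1 ∈ Ioo (3 * p.2 - 3) (3 * p.2 - 3 + (p.2 - 1/3) ^ 3)}

theorem measurableSet_stripEx4 : MeasurableSet stripEx4 := by
  simp only [stripEx4, mem_Ioo, ofPred_and]
  refine .inter (.inter ?_ ?_) (.inter ?_ ?_) <;> apply measurableSet_lt <;> fun_prop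

theorem stripEx4_subset_triangleEx4 : stripEx4 ⊆ TriangleEx4 := by
  rintro ⟨x, y⟩ ⟨⟨hy₁, hy₂⟩, hx₁, hx₂⟩
  have : (y - 1/3) ^ 3 < (1/3 : ℝ) ^ 3 := pow_lt_pow_left₀ (by linarith) (by linarith) three_ne_zero
  exact ⟨hy₁, by linarith, by linarith⟩

theorem volume_fiber_stripEx4 (y : ℝ) :
    volume {x | (x, y) ∈ stripEx4} =
      (Ioo (1/3) (2/3)).indicator (fun y => ENNReal.ofReal ((y - 1/3) ^ 3)) y := by
  by_cases hy : y ∈ Ioo (1/3 : ℝ) (2/3)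
  · simp only [stripEx4, mem_ofPred_eq, hy, true_and, indicator_of_mem hy, ofPred_mem_eq,
      Real.volume_Ioo]
    ring_nf
  · simp only [stripEx4, mem_ofPred_eq, hy, false_and, indicator_of_notMem hy, ofPred_false,
      measure_empty]

theorem uEx4_eq_pow_three_add (x y : ℝ) : uEx4 (x, y) = (y - 1/3) ^ 3 + (x - (3 * y - 3)) * y ^ 2 / 3 := by
  unfold uEx4; ring

theorem uEx4_mem_Ioc_of_mem_stripEx4 {p : ℝ × ℝ} (hp : p ∈ stripEx4) :
    uEx4 p ∈ Ioc 0 ((2 * (p.2 - 1/3)) ^ 3) := by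
  obtain ⟨x, y⟩ := p
  obtain ⟨⟨hy₁, hy₂⟩, hx₁, hx₂⟩ := hp
  have hε : 0 < y - 1/3 := by linarith
  have hy : y ^ 2 ≤ 1 := by nlinarith
  rw [uEx4_eq_pow_three_add]
  constructor
  · have : 0 < x - (3 * y - 3) := by linarith
    positivity
  · nlinarith [pow_pos hε 3]

theorem le_zEx4x_of_mem_stripEx4 {p : ℝ × ℝ} (hp : p ∈ stripEx4) :
    exp (-3) / 324 / (p.2 - 1/3) ^ 2 ≤ zEx4x p := by
  obtain ⟨hu₀, hu₁⟩ := uEx4_mem_Ioc_of_mem_stripEx4 hp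
  obtain ⟨x, y⟩ := p
  obtain ⟨⟨hy₁, hy₂⟩, -⟩ := hp
  dsimp only at hu₀ hu₁ ⊢
  have hε : 0 < y - 1/3 := by linarith
  have hα₀ : 0 < alphaEx4 (x, y) := alphaEx4_pos hu₀.le
  have hα₁ : alphaEx4 (x, y) ^ 2 ≤ 1 := by
    have := cbrt_le_of_le_pow_three hu₀.le (by positivity) hu₁
    rw [alphaEx4_eq_cbrt_uEx4]
    nlinarith [cbrt_nonneg hu₀.le]
  have hexp : exp (-3) ≤ exp (1 / alphaEx4 (x, y) - 1 / y) := by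
    have : 1 / y < 3 := by rw [div_lt_iff₀ (by linarith)]; linarith
    gcongr
    linarith [one_div_pos.2 hα₀]
  have hy : 1/9 ≤ y ^ 2 := by nlinarith
  have hu := inv_sq_le_rpow_neg_two_thirds hu₀ (by positivity) hu₁
  rw [zEx4x_eq hu₀]
  calc exp (-3) / 324 / (y - 1/3) ^ 2
      = exp (-3) * (1/9 / 9 * ((2 * (y - 1/3)) ^ 2)⁻¹) / 1 := by
        rw [mul_pow, mul_inv]; ring
    _ ≤ _ := by gcongr

theorem sq_le_zEx4x_sq_of_mem_stripEx4 {p : ℝ × ℝ} (hp : p ∈ stripEx4) :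
    (exp (-3) / 324) ^ 2 / (p.2 - 1/3) ^ 4 ≤ zEx4x p ^ 2 :=
  calc (exp (-3) / 324) ^ 2 / (p.2 - 1/3) ^ 4 = (exp (-3) / 324 / (p.2 - 1/3) ^ 2) ^ 2 := by
        rw [div_pow _ (_ ^ 2), ← pow_mul]
    _ ≤ zEx4x p ^ 2 := pow_le_pow_left₀ (by positivity) (le_zEx4x_of_mem_stripEx4 hp) 2

theorem lintegral_stripEx4_eq_top {c : ℝ} (hc : 0 < c) :
    ∫⁻ p in stripEx4, ENNReal.ofReal (c / (p.2 - 1/3) ^ 4) = ⊤ := by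
  rw [Measure.volume_eq_prod, setLIntegral_comp_snd_eq_lintegral_mul_measure_fiber
    measurableSet_stripEx4 (f := fun y => ENNReal.ofReal (c / (y - 1/3) ^ 4)) (by fun_prop)]
  simp_rw [volume_fiber_stripEx4,
    ← indicator_mul_right _ fun y => ENNReal.ofReal (c / (y - 1/3) ^ 4)]
  rw [lintegral_indicator measurableSet_Ioo]
  calc ∫⁻ y in Ioo (1/3) (2/3), ENNReal.ofReal (c / (y - 1/3) ^ 4) * ENNReal.ofReal ((y - 1/3) ^ 3)
      = ∫⁻ y in Ioo (1/3) (2/3), ENNReal.ofReal c * ENNReal.ofReal (y - 1/3)⁻¹ := by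
        refine setLIntegral_congr_fun measurableSet_Ioo fun y hy => ?_
        have hε : 0 < y - 1/3 := sub_pos.2 hy.1
        rw [← ENNReal.ofReal_mul (by positivity), ← ENNReal.ofReal_mul hc.le]
        congr 1
        field_simp
    _ = ⊤ := by
        rw [lintegral_const_mul' _ _ ENNReal.ofReal_ne_top,
          setLIntegral_Ioo_ofReal_inv_sub_eq_top (by norm_num), ENNReal.mul_top (by simpa using hc)]

theorem stmt_6 :
    (∫⁻ p in TriangleEx4, ENNReal.ofReal ((zEx4x p) ^ 2) = ⊤) ∧
    ¬ IntegrableOn (fun p => (zEx4x p) ^ 2 + (zEx4y p) ^ 2) TriangleEx4 volume := by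
  have hx : ∫⁻ p in TriangleEx4, ENNReal.ofReal ((zEx4x p) ^ 2) = ⊤ := by
    refine top_le_iff.1 ?_
    calc ⊤ = ∫⁻ p in stripEx4, ENNReal.ofReal ((exp (-3) / 324) ^ 2 / (p.2 - 1/3) ^ 4) :=
          (lintegral_stripEx4_eq_top (by positivity)).symm
      _ ≤ ∫⁻ p in stripEx4, ENNReal.ofReal ((zEx4x p) ^ 2) :=
          setLIntegral_mono' measurableSet_stripEx4 fun p hp =>
            ENNReal.ofReal_le_ofReal (sq_le_zEx4x_sq_of_mem_stripEx4 hp)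
      _ ≤ _ := lintegral_mono_set stripEx4_subset_triangleEx4
  exact ⟨hx, not_integrableOn_of_le_of_lintegral_eq_top
    (fun p => le_add_of_nonneg_right (sq_nonneg _)) hx⟩
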